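/- Let (Ω, ℬ, P) be a probability space and let F, G be sub-σ-algebras of ℬ. Then ρ(F, G) ≤ 2·(φ(F, G))^{1/2}, where φ(F,G) = sup{|P(A∩B)/P(B) − P(A)| : A ∈ G, B ∈ F, P(B) > 0} and ρ(F,G) = sup |Cov(f,g)|/√(Var(f)·Var(g)), the supremum being over square-integrable F-measurable f and G-measurable g with Var(f) > 0 and Var(g) > 0. -/

import Mathlib

/-!
The `φ`-condition on sets gives, through the layer-cake formula, the `L^∞` bound
`‖E[y | F]‖_∞ ≤ 2φ ‖y‖_∞` for bounded centred `G`-measurable `y`. To upgrade it to `L²`, condition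
`y` alternately on `F` and on `G`: the squared `L²` norms `n k` of the iterates form a log-convex
sequence (`n (k+1) = E[z_k z_{k+2}]`, then Cauchy–Schwarz), while the `L^∞` bound gives
`n (2j) ≤ (2φ)^(2j) ‖y‖_∞²`, and log-convexity turns this into `n 1 ≤ 2φ n 0`, that is
`‖E[y | F]‖₂² ≤ 2φ ‖y‖₂²`. Pulling out `f` and applying Cauchy–Schwarz then gives
`|Cov(f, g)| ≤ √(2φ) σ(f) σ(g)` for bounded `g`; truncating `g` does not increase its variance,
which removes the boundedness, and `√(2φ) ≤ 2√φ`.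
-/

open MeasureTheory ProbabilityTheory Filter Topology

section General

variable {Ω : Type*} {m m₀ : MeasurableSpace Ω} {μ : Measure Ω}

theorem abs_integral_mul_le_sqrt_mul_sqrt {u v : Ω → ℝ} (hu : MemLp u 2 μ) (hv : MemLp v 2 μ) :
    |∫ ω, u ω * v ω ∂μ| ≤ √(∫ ω, u ω ^ 2 ∂μ) * √(∫ ω, v ω ^ 2 ∂μ) := by
  have hholder := integral_mul_le_Lp_mul_Lq_of_nonneg Real.HolderConjugate.two_two
    (ae_of_all _ fun ω => abs_nonneg (u ω)) (ae_of_all _ fun ω => abs_nonneg (v ω))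
    (by rw [ENNReal.ofReal_ofNat]; exact hu.abs) (by rw [ENNReal.ofReal_ofNat]; exact hv.abs)
  simp only [Real.rpow_two, sq_abs, ← Real.sqrt_eq_rpow] at hholder
  calc |∫ ω, u ω * v ω ∂μ| ≤ ∫ ω, |u ω| * |v ω| ∂μ := by
        simpa [abs_mul] using abs_integral_le_integral_abs (f := fun ω => u ω * v ω) (μ := μ)
    _ ≤ _ := hholder

theorem integral_mul_condExp [IsFiniteMeasure μ] (hm : m ≤ m₀) {x y : Ω → ℝ}
    (hx : StronglyMeasurable[m] x) (hxy : Integrable (x * y) μ) (hy : Integrable y μ) :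
    ∫ ω, x ω * μ[y|m] ω ∂μ = ∫ ω, x ω * y ω ∂μ := by
  calc ∫ ω, x ω * μ[y|m] ω ∂μ = ∫ ω, μ[x * y|m] ω ∂μ :=
        integral_congr_ae (condExp_mul_of_stronglyMeasurable_left hx hxy hy).symm
    _ = ∫ ω, x ω * y ω ∂μ := integral_condExp hm

theorem condExp_le_of_forall_setIntegral_le [IsFiniteMeasure μ] (hm : m ≤ m₀) {y : Ω → ℝ}
    (hy : Integrable y μ) {c : ℝ}
    (h : ∀ s, MeasurableSet[m] s → ∫ ω in s, y ω ∂μ ≤ c * μ.real s) :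
    ∀ᵐ ω ∂μ, μ[y|m] ω ≤ c := by
  refine ae_of_ae_trim hm (ae_le_of_forall_setIntegral_le (g := fun _ => c)
    (integrable_condExp.trim hm stronglyMeasurable_condExp) (integrable_const c) fun s hs _ => ?_)
  rw [← setIntegral_trim hm stronglyMeasurable_condExp hs,
    ← setIntegral_trim hm stronglyMeasurable_const hs, setIntegral_condExp hm hy hs,
    setIntegral_const, smul_eq_mul, mul_comm]
  exact h s hs

theorem abs_condExp_le_of_forall_abs_setIntegral_le [IsFiniteMeasure μ] (hm : m ≤ m₀)
    {y : Ω → ℝ} (hy : Integrable y μ) {c : ℝ}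
    (h : ∀ s, MeasurableSet[m] s → |∫ ω in s, y ω ∂μ| ≤ c * μ.real s) :
    ∀ᵐ ω ∂μ, |μ[y|m] ω| ≤ c := by
  have hle := condExp_le_of_forall_setIntegral_le hm hy fun s hs => (le_abs_self _).trans (h s hs)
  have hge := condExp_le_of_forall_setIntegral_le hm hy.neg fun s hs => by
    simpa only [Pi.neg_apply, integral_neg] using (neg_le_abs _).trans (h s hs)
  filter_upwards [hle, hge, condExp_neg y m] with ω h₁ h₂ h₃
  rw [h₃, Pi.neg_apply] at h₂
  exact abs_le.2 ⟨by linarith, h₁⟩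

theorem tendsto_integral_of_abs_le_of_eventually_eq {u : ℕ → Ω → ℝ} {f : Ω → ℝ}
    (hu : ∀ n, AEStronglyMeasurable (u n) μ) (hf : Integrable f μ)
    (hle : ∀ n ω, |u n ω| ≤ |f ω|) (heq : ∀ ω, ∀ᶠ n in atTop, u n ω = f ω) :
    Tendsto (fun n => ∫ ω, u n ω ∂μ) atTop (𝓝 (∫ ω, f ω ∂μ)) :=
  tendsto_integral_of_dominated_convergence (fun ω => |f ω|) hu hf.abs
    (fun n => ae_of_all _ (hle n)) (ae_of_all _ fun ω => tendsto_nhds_of_eventually_eq (heq ω))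

theorem tendsto_covariance_of_abs_le_of_eventually_eq [IsProbabilityMeasure μ]
    {f g : Ω → ℝ} {u : ℕ → Ω → ℝ} (hf : MemLp f 2 μ) (hg : MemLp g 2 μ)
    (hu : ∀ n, AEStronglyMeasurable (u n) μ) (hle : ∀ n ω, |u n ω| ≤ |g ω|)
    (heq : ∀ ω, ∀ᶠ n in atTop, u n ω = g ω) :
    Tendsto (fun n => cov[f, u n; μ]) atTop (𝓝 cov[f, g; μ]) := by
  have hu2 : ∀ n, MemLp (u n) 2 μ := fun n => hg.of_le (hu n) (ae_of_all _ (hle n))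
  simp_rw [covariance_eq_sub hf (hu2 _), covariance_eq_sub hf hg]
  refine .sub ?_ (.const_mul _ ?_)
  · refine tendsto_integral_of_abs_le_of_eventually_eq
      (fun n => (hf.integrable_mul (hu2 n)).aestronglyMeasurable) (hf.integrable_mul hg)
      (fun n ω => ?_) fun ω => ?_
    · simp only [Pi.mul_apply, abs_mul]
      exact mul_le_mul_of_nonneg_left (hle n ω) (abs_nonneg _)
    · filter_upwards [heq ω] with n hn
      simp [hn]
  · exact tendsto_integral_of_abs_le_of_eventually_eq hu (hg.integrable one_le_two) hle heq

theorem LipschitzWith.variance_comp_le [IsProbabilityMeasure μ] {h : ℝ → ℝ}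
    (hh : LipschitzWith 1 h) {X : Ω → ℝ} (hX : MemLp X 2 μ) :
    Var[fun ω => h (X ω); μ] ≤ Var[X; μ] := by
  have hhX : AEStronglyMeasurable (fun ω => h (X ω)) μ :=
    hh.continuous.comp_aestronglyMeasurable hX.1
  have hpt : ∀ ω, (h (X ω) - h μ[X]) ^ 2 ≤ (X ω - μ[X]) ^ 2 := fun ω =>
    sq_le_sq.2 (by simpa [Real.dist_eq] using hh.dist_le_mul (X ω) μ[X])
  calc Var[fun ω => h (X ω); μ] = Var[fun ω => h (X ω) - h μ[X]; μ] :=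
        (variance_sub_const hhX _).symm
    _ ≤ ∫ ω, (h (X ω) - h μ[X]) ^ 2 ∂μ :=
        variance_le_expectation_sq (hhX.sub aestronglyMeasurable_const)
    _ ≤ ∫ ω, (X ω - μ[X]) ^ 2 ∂μ :=
        integral_mono_of_nonneg (ae_of_all _ fun _ => sq_nonneg _)
          (hX.sub (memLp_const _)).integrable_sq (ae_of_all _ hpt)
    _ = Var[X; μ] := (variance_eq_integral hX.aemeasurable).symm

end General

theorem pow_mul_le_pow_mul_of_sq_le_mul {n : ℕ → ℝ} (hn : ∀ k, 0 ≤ n k)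
    (hlog : ∀ k, n (k + 1) ^ 2 ≤ n k * n (k + 2)) (h₁ : 0 < n 1) (k : ℕ) :
    n 1 ^ k * n 0 ≤ n 0 ^ k * n k := by
  have h₀ : 0 < n 0 := by nlinarith [hlog 0, hn 2]
  -- log-convexity: the ratios `n (k + 1) / n k` increase
  have hratio : ∀ k, 0 < n k ∧ n 1 * n k ≤ n 0 * n (k + 1) := by
    intro k
    induction k with
    | zero => exact ⟨h₀, (mul_comm _ _).le⟩
    | succ k ih =>
      obtain ⟨hk, hle⟩ := ih
      have hk' : 0 < n (k + 1) := pos_of_mul_pos_right ((mul_pos h₁ hk).trans_le hle) h₀.le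
      refine ⟨hk', le_of_mul_le_mul_left ?_ hk⟩
      nlinarith [mul_le_mul_of_nonneg_right hle hk'.le, mul_le_mul_of_nonneg_left (hlog k) h₀.le]
  induction k with
  | zero => simp
  | succ k ih =>
    calc n 1 ^ (k + 1) * n 0 = n 1 * (n 1 ^ k * n 0) := by ring
      _ ≤ n 1 * (n 0 ^ k * n k) := by gcongr
      _ = n 0 ^ k * (n 1 * n k) := by ring
      _ ≤ n 0 ^ k * (n 0 * n (k + 1)) := mul_le_mul_of_nonneg_left (hratio k).2 (by positivity)
      _ = n 0 ^ (k + 1) * n (k + 1) := by ring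

theorem le_mul_of_sq_le_mul_of_le_pow {n : ℕ → ℝ} (hn : ∀ k, 0 ≤ n k)
    (hlog : ∀ k, n (k + 1) ^ 2 ≤ n k * n (k + 2)) {c K : ℝ} (hc : 0 ≤ c)
    (hbd : ∀ j, n (2 * j) ≤ c ^ (2 * j) * K) : n 1 ≤ c * n 0 := by
  by_contra! hlt
  have h₁ : 0 < n 1 := (mul_nonneg hc (hn 0)).trans_lt hlt
  have h₀ : 0 < n 0 := by nlinarith [hlog 0, hn 2]
  set r := (c * n 0 / n 1) ^ 2
  have hr : ∀ j, n 0 ≤ r ^ j * K := by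
    intro j
    rw [show r ^ j * K = (c * n 0) ^ (2 * j) * K / n 1 ^ (2 * j) by
      rw [← pow_mul, div_pow]; ring]
    rw [le_div_iff₀ (by positivity)]
    calc n 0 * n 1 ^ (2 * j) = n 1 ^ (2 * j) * n 0 := by ring
      _ ≤ n 0 ^ (2 * j) * n (2 * j) := pow_mul_le_pow_mul_of_sq_le_mul hn hlog h₁ _
      _ ≤ n 0 ^ (2 * j) * (c ^ (2 * j) * K) :=
        mul_le_mul_of_nonneg_left (hbd j) (by positivity)
      _ = (c * n 0) ^ (2 * j) * K := by ring
  have hr1 : r < 1 := by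
    rw [sq_lt_one_iff₀ (by positivity), div_lt_one h₁]
    exact hlt
  have hlim : Tendsto (fun j => r ^ j * K) atTop (𝓝 0) := by
    simpa using (tendsto_pow_atTop_nhds_zero_of_lt_one (by positivity) hr1).mul_const K
  exact h₀.not_ge (ge_of_tendsto' hlim hr)

noncomputable def altCondExp {Ω : Type*} (F G : MeasurableSpace Ω) {m : MeasurableSpace Ω}
    (P : Measure[m] Ω) (g : Ω → ℝ) : ℕ → Ω → ℝ
  | 0 => g
  | k + 1 => condExp (if Even k then F else G) P (altCondExp F G P g k)

section Alternating

variable {Ω : Type*} {F G m : MeasurableSpace Ω} {P : Measure Ω} {g : Ω → ℝ}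

theorem stronglyMeasurable_altCondExp_succ (k : ℕ) :
    StronglyMeasurable[if Even k then F else G] (altCondExp F G P g (k + 1)) :=
  stronglyMeasurable_condExp

theorem stronglyMeasurable_altCondExp (hg : StronglyMeasurable[G] g) :
    ∀ k, StronglyMeasurable[if Even (k + 1) then F else G] (altCondExp F G P g k)
  | 0 => by rw [if_neg (by decide)]; exact hg
  | k + 1 => by convert stronglyMeasurable_altCondExp_succ k using 2; simp [Nat.even_add_one]

theorem stronglyMeasurable_altCondExp_two_mul (hg : StronglyMeasurable[G] g) (j : ℕ) :
    StronglyMeasurable[G] (altCondExp F G P g (2 * j)) := by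
  convert stronglyMeasurable_altCondExp (F := F) (P := P) hg (2 * j) using 2
  simp

theorem memLp_altCondExp (hg : MemLp g 2 P) : ∀ k, MemLp (altCondExp F G P g k) 2 P
  | 0 => hg
  | k + 1 => (memLp_altCondExp hg k).condExp one_le_two

theorem integral_altCondExp [IsFiniteMeasure P] (hF : F ≤ m) (hG : G ≤ m) :
    ∀ k, ∫ ω, altCondExp F G P g k ω ∂P = ∫ ω, g ω ∂P
  | 0 => rfl
  | k + 1 => by
    have hσ : (if Even k then F else G) ≤ m := by split_ifs <;> assumption
    exact (integral_condExp hσ).trans (integral_altCondExp hF hG k)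

theorem integral_altCondExp_sq [IsFiniteMeasure P] (hF : F ≤ m) (hG : G ≤ m)
    (hgm : StronglyMeasurable[G] g) (hg : MemLp g 2 P) (k : ℕ) :
    ∫ ω, altCondExp F G P g (k + 1) ω ^ 2 ∂P =
      ∫ ω, altCondExp F G P g k ω * altCondExp F G P g (k + 2) ω ∂P := by
  set z := altCondExp F G P g
  have hσ : ∀ k : ℕ, (if Even k then F else G) ≤ m := fun k => by split_ifs <;> assumption
  have hz := memLp_altCondExp (F := F) (G := G) hg
  calc ∫ ω, z (k + 1) ω ^ 2 ∂P = ∫ ω, z (k + 1) ω * z k ω ∂P := by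
        simp_rw [sq]
        exact integral_mul_condExp (hσ k) (stronglyMeasurable_altCondExp_succ k)
          ((hz (k + 1)).integrable_mul (hz k)) ((hz k).integrable one_le_two)
    _ = ∫ ω, z k ω * z (k + 1) ω ∂P := by simp_rw [mul_comm]
    _ = ∫ ω, z k ω * z (k + 2) ω ∂P :=
        (integral_mul_condExp (hσ (k + 1)) (stronglyMeasurable_altCondExp hgm k)
          ((hz k).integrable_mul (hz (k + 1))) ((hz (k + 1)).integrable one_le_two)).symm

theorem sq_integral_altCondExp_sq_le [IsFiniteMeasure P] (hF : F ≤ m) (hG : G ≤ m)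
    (hgm : StronglyMeasurable[G] g) (hg : MemLp g 2 P) (k : ℕ) :
    (∫ ω, altCondExp F G P g (k + 1) ω ^ 2 ∂P) ^ 2 ≤
      (∫ ω, altCondExp F G P g k ω ^ 2 ∂P) * ∫ ω, altCondExp F G P g (k + 2) ω ^ 2 ∂P := by
  rw [integral_altCondExp_sq hF hG hgm hg k]
  calc _ ≤ (√(∫ ω, altCondExp F G P g k ω ^ 2 ∂P) *
        √(∫ ω, altCondExp F G P g (k + 2) ω ^ 2 ∂P)) ^ 2 := by
        rw [← sq_abs]
        gcongr
        exact abs_integral_mul_le_sqrt_mul_sqrt (memLp_altCondExp hg k) (memLp_altCondExp hg _)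
    _ = _ := by
        rw [mul_pow, Real.sq_sqrt (integral_nonneg fun _ => sq_nonneg _),
          Real.sq_sqrt (integral_nonneg fun _ => sq_nonneg _)]

end Alternating

/-- `|P(A | B) - P(A)| ≤ φ`, multiplied through by `P B` so that it also covers `P B = 0`. -/
def PhiMixingLE {Ω : Type*} {m : MeasurableSpace Ω} (P : Measure[m] Ω) (F G : MeasurableSpace Ω)
    (φ : ℝ) : Prop :=
  ∀ A B, MeasurableSet[G] A → MeasurableSet[F] B →
    |P.real (A ∩ B) - P.real A * P.real B| ≤ φ * P.real B

namespace PhiMixingLE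

variable {Ω : Type*} {F G m : MeasurableSpace Ω} {P : Measure Ω} [IsProbabilityMeasure P]
  {φ : ℝ}

theorem nonneg (hφ : PhiMixingLE P F G φ) : 0 ≤ φ := by
  simpa using hφ Set.univ Set.univ MeasurableSet.univ MeasurableSet.univ

theorem abs_setIntegral_sub_le (hφ : PhiMixingLE P F G φ) (hG : G ≤ m)
    {u : Ω → ℝ} {b : ℝ} (hu : Measurable[G] u) (hu0 : 0 ≤ᵐ[P] u) (hub : u ≤ᵐ[P] fun _ => b)
    {B : Set Ω} (hB : MeasurableSet[F] B) :
    |∫ ω in B, u ω ∂P - (∫ ω, u ω ∂P) * P.real B| ≤ φ * b * P.real B := by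
  have hb : 0 ≤ b := by
    obtain ⟨ω, h0, h1⟩ := (hu0.and hub).exists
    exact h0.trans h1
  have hint : Integrable u P :=
    .of_bound (hu.mono hG le_rfl).aestronglyMeasurable b
      (by filter_upwards [hu0, hub] with ω h0 h1; rwa [Real.norm_of_nonneg h0])
  have hlevel : ∀ t, MeasurableSet[m] {ω | t ≤ u ω} := fun t =>
    hG _ (measurableSet_le measurable_const hu)
  have hanti : ∀ s : Set Ω, Antitone fun t => P.real ({ω | t ≤ u ω} ∩ s) := fun s _ _ hst =>
    measureReal_mono (Set.inter_subset_inter_left _ fun ω hω => hst.trans hω)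
  have hintOn : ∀ s : Set Ω, IntegrableOn (fun t => P.real ({ω | t ≤ u ω} ∩ s)) (Set.Ioc 0 b) :=
    fun s => ((hanti s).locallyIntegrable.integrableOn_isCompact isCompact_Icc).mono_set
      Set.Ioc_subset_Icc_self
  have hB' : ∫ ω in B, u ω ∂P = ∫ t in Set.Ioc 0 b, P.real ({ω | t ≤ u ω} ∩ B) := by
    rw [hint.integrableOn.integral_eq_integral_Ioc_meas_le (ae_restrict_of_ae hu0)
      (ae_restrict_of_ae hub)]
    simp_rw [measureReal_restrict_apply (hlevel _)]
  have hintOnUniv : IntegrableOn (fun t => P.real {ω | t ≤ u ω}) (Set.Ioc 0 b) := by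
    simpa using hintOn Set.univ
  rw [hB', hint.integral_eq_integral_Ioc_meas_le hu0 hub, ← integral_mul_const,
    ← integral_sub (hintOn B) (hintOnUniv.mul_const _), ← Real.norm_eq_abs]
  calc _ ≤ φ * P.real B * volume.real (Set.Ioc 0 b) :=
        norm_setIntegral_le_of_norm_le_const measure_Ioc_lt_top fun t _ =>
          hφ _ B (measurableSet_le measurable_const hu) hB
    _ = φ * b * P.real B := by rw [Real.volume_real_Ioc_of_le hb]; ring

theorem abs_condExp_le (hφ : PhiMixingLE P F G φ) (hF : F ≤ m) (hG : G ≤ m)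
    {y : Ω → ℝ} {b : ℝ} (hy : Measurable[G] y) (hyb : ∀ᵐ ω ∂P, |y ω| ≤ b) (hy0 : ∫ ω, y ω ∂P = 0) :
    ∀ᵐ ω ∂P, |P[y|F] ω| ≤ 2 * φ * b := by
  have hyint : Integrable y P := .of_bound (hy.mono hG le_rfl).aestronglyMeasurable b hyb
  refine abs_condExp_le_of_forall_abs_setIntegral_le hF hyint fun B hB => ?_
  -- shifting `y` by `b` puts it into `[0, 2b]`
  have hshift := hφ.abs_setIntegral_sub_le hG (u := fun ω => y ω + b) (b := 2 * b)
    (hy.add_const b)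
    (by filter_upwards [hyb] with ω h using show 0 ≤ y ω + b by linarith [neg_abs_le (y ω)])
    (by filter_upwards [hyb] with ω h using show y ω + b ≤ 2 * b by linarith [le_abs_self (y ω)])
    hB
  rwa [integral_add hyint.integrableOn (integrable_const b),
    integral_add hyint (integrable_const b),
    hy0, setIntegral_const, integral_const, smul_eq_mul, smul_eq_mul, probReal_univ,
    zero_add, one_mul, mul_comm (P.real B) b, add_sub_cancel_right,
    show φ * (2 * b) = 2 * φ * b by ring] at hshift

theorem abs_altCondExp_two_mul_le (hφ : PhiMixingLE P F G φ) (hF : F ≤ m) (hG : G ≤ m)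
    {g : Ω → ℝ} (hgm : StronglyMeasurable[G] g) {C : ℝ} (hgC : ∀ᵐ ω ∂P, |g ω| ≤ C)
    (hg0 : ∫ ω, g ω ∂P = 0) (j : ℕ) :
    ∀ᵐ ω ∂P, |altCondExp F G P g (2 * j) ω| ≤ (2 * φ) ^ j * C := by
  induction j with
  | zero =>
    simp only [Nat.mul_zero, pow_zero, one_mul]
    exact hgC
  | succ j ih =>
    have hodd : ∀ᵐ ω ∂P, |altCondExp F G P g (2 * j + 1) ω| ≤ (2 * φ) ^ (j + 1) * C := by
      have h := hφ.abs_condExp_le hF hG (stronglyMeasurable_altCondExp_two_mul hgm j).measurable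
        ih ((integral_altCondExp hF hG _).trans hg0)
      simp only [altCondExp, even_two_mul, if_true]
      simpa only [pow_succ, mul_comm, mul_left_comm] using h
    simpa [altCondExp, Nat.even_add_one, mul_add] using
      ae_bdd_abs_condExp_of_ae_bdd_abs (m := G) hodd

theorem integral_condExp_sq_le (hφ : PhiMixingLE P F G φ) (hF : F ≤ m) (hG : G ≤ m)
    {g : Ω → ℝ} (hgm : StronglyMeasurable[G] g) {C : ℝ} (hgC : ∀ᵐ ω ∂P, |g ω| ≤ C)
    (hg0 : ∫ ω, g ω ∂P = 0) :
    ∫ ω, P[g|F] ω ^ 2 ∂P ≤ 2 * φ * ∫ ω, g ω ^ 2 ∂P := by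
  have hg : MemLp g 2 P := .of_bound (hgm.mono hG).aestronglyMeasurable C hgC
  refine le_mul_of_sq_le_mul_of_le_pow (n := fun k => ∫ ω, altCondExp F G P g k ω ^ 2 ∂P)
    (fun k => integral_nonneg fun _ => sq_nonneg _) (sq_integral_altCondExp_sq_le hF hG hgm hg)
    (by linarith [hφ.nonneg]) (K := C ^ 2) fun j => ?_
  calc ∫ ω, altCondExp F G P g (2 * j) ω ^ 2 ∂P ≤ ∫ _, ((2 * φ) ^ j * C) ^ 2 ∂P := by
        refine integral_mono_ae ((memLp_altCondExp hg _).integrable_sq) (integrable_const _) ?_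
        filter_upwards [hφ.abs_altCondExp_two_mul_le hF hG hgm hgC hg0 j] with ω hω
        exact sq_le_sq' (abs_le.1 hω).1 (abs_le.1 hω).2
    _ = (2 * φ) ^ (2 * j) * C ^ 2 := by simp [mul_pow, pow_mul']

theorem abs_covariance_le_of_abs_le (hφ : PhiMixingLE P F G φ) (hF : F ≤ m) (hG : G ≤ m)
    {f g : Ω → ℝ} (hf : Measurable[F] f) (hf2 : MemLp f 2 P) (hg : Measurable[G] g) {C : ℝ}
    (hgC : ∀ᵐ ω ∂P, |g ω| ≤ C) :
    |cov[f, g; P]| ≤ √(2 * φ) * √Var[f; P] * √Var[g; P] := by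
  set f' := fun ω => f ω - P[f]
  set g' := fun ω => g ω - P[g]
  have hf'm : StronglyMeasurable[F] f' := (hf.sub_const _).stronglyMeasurable
  have hg'm : StronglyMeasurable[G] g' := (hg.sub_const _).stronglyMeasurable
  have hf' : MemLp f' 2 P := hf2.sub (memLp_const _)
  have hg'C : ∀ᵐ ω ∂P, |g' ω| ≤ C + |P[g]| := by
    filter_upwards [hgC] with ω hω using (abs_sub _ _).trans (by linarith)
  have hg2 : MemLp g 2 P := .of_bound (hg.mono hG le_rfl).aestronglyMeasurable C hgC
  have hg' : MemLp g' 2 P := hg2.sub (memLp_const _)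
  have hg'0 : ∫ ω, g' ω ∂P = 0 := by
    simp [g', integral_sub (hg2.integrable one_le_two) (integrable_const _)]
  have hcond : MemLp (P[g'|F]) 2 P := hg'.condExp one_le_two
  rw [variance_eq_integral hf2.aemeasurable, variance_eq_integral hg2.aemeasurable]
  calc |cov[f, g; P]| = |∫ ω, f' ω * P[g'|F] ω ∂P| := by
        rw [integral_mul_condExp hF hf'm (hf'.integrable_mul hg') (hg'.integrable one_le_two)]
        rfl
    _ ≤ √(∫ ω, f' ω ^ 2 ∂P) * √(∫ ω, P[g'|F] ω ^ 2 ∂P) :=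
        abs_integral_mul_le_sqrt_mul_sqrt hf' hcond
    _ ≤ √(∫ ω, f' ω ^ 2 ∂P) * √(2 * φ * ∫ ω, g' ω ^ 2 ∂P) := by
        gcongr
        exact hφ.integral_condExp_sq_le hF hG hg'm hg'C hg'0
    _ = √(2 * φ) * √(∫ ω, f' ω ^ 2 ∂P) * √(∫ ω, g' ω ^ 2 ∂P) := by
        rw [Real.sqrt_mul (by linarith [hφ.nonneg])]
        ring

theorem abs_covariance_le (hφ : PhiMixingLE P F G φ) (hF : F ≤ m) (hG : G ≤ m) {f g : Ω → ℝ}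
    (hf : Measurable[F] f) (hg : Measurable[G] g) (hf2 : MemLp f 2 P) (hg2 : MemLp g 2 P) :
    |cov[f, g; P]| ≤ √(2 * φ) * √Var[f; P] * √Var[g; P] := by
  set ψ : ℕ → ℝ → ℝ := fun n t => max (-n) (min n t)
  have hψ_lip : ∀ n, LipschitzWith 1 (ψ n) := fun n =>
    (LipschitzWith.id.const_min _).const_max _
  have hψ_bdd : ∀ n t, |ψ n t| ≤ n := fun n t =>
    abs_le.2 ⟨le_max_left _ _, max_le (by simp) (min_le_left _ _)⟩
  have hψ_le : ∀ n t, |ψ n t| ≤ |t| := fun n t => by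
    simpa [ψ] using hψ_lip n |>.dist_le_mul t 0
  have hψ_eq : ∀ t, ∀ᶠ n : ℕ in atTop, ψ n t = t := fun t => by
    filter_upwards [eventually_ge_atTop ⌈|t|⌉₊] with n hn
    have ht := (Nat.le_ceil |t|).trans (Nat.cast_le.2 hn)
    simp [ψ, min_eq_right (le_of_abs_le ht), max_eq_right (neg_le_of_abs_le ht)]
  have hψg : ∀ n, Measurable[G] fun ω => ψ n (g ω) := fun n =>
    (hψ_lip n).continuous.measurable.comp hg
  have hlim : Tendsto (fun n => cov[f, fun ω => ψ n (g ω); P]) atTop (𝓝 cov[f, g; P]) :=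
    tendsto_covariance_of_abs_le_of_eventually_eq hf2 hg2
      (fun n => ((hψg n).mono hG le_rfl).aestronglyMeasurable) (fun n ω => hψ_le n _)
      fun ω => hψ_eq (g ω)
  refine le_of_tendsto' hlim.abs fun n => ?_
  calc |cov[f, fun ω => ψ n (g ω); P]|
      ≤ √(2 * φ) * √Var[f; P] * √Var[fun ω => ψ n (g ω); P] :=
        hφ.abs_covariance_le_of_abs_le hF hG hf hf2 (hψg n) (ae_of_all _ fun ω => hψ_bdd n _)
    _ ≤ √(2 * φ) * √Var[f; P] * √Var[g; P] := by
        gcongr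
        exact (hψ_lip n).variance_comp_le hg2

end PhiMixingLE

theorem phiMixingLE_sSup {Ω : Type*} {F G m : MeasurableSpace Ω} {P : Measure[m] Ω}
    [IsProbabilityMeasure P] :
    PhiMixingLE P F G (sSup {x | ∃ A B, MeasurableSet[G] A ∧ MeasurableSet[F] B ∧ 0 < P B ∧
      x = |P.real (A ∩ B) / P.real B - P.real A|}) := by
  set S := {x | ∃ A B, MeasurableSet[G] A ∧ MeasurableSet[F] B ∧ 0 < P B ∧
      x = |P.real (A ∩ B) / P.real B - P.real A|}
  have hS : BddAbove S := by
    refine ⟨1, ?_⟩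
    rintro _ ⟨A, B, -, -, -, rfl⟩
    have h₁ : P.real (A ∩ B) / P.real B ≤ 1 :=
      div_le_one_of_le₀ (measureReal_mono Set.inter_subset_right) measureReal_nonneg
    have h₂ : P.real A ≤ 1 := measureReal_le_one
    rw [abs_sub_le_iff]
    have h₃ : 0 ≤ P.real (A ∩ B) / P.real B := div_nonneg measureReal_nonneg measureReal_nonneg
    constructor <;> linarith [measureReal_nonneg (μ := P) (s := A)]
  intro A B hA hB
  rcases eq_zero_or_pos (P B) with hB0 | hB0
  · have hAB : P (A ∩ B) = 0 := measure_mono_null Set.inter_subset_right hB0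
    simp [Measure.real, hAB, hB0]
  have hBpos : 0 < P.real B := ENNReal.toReal_pos hB0.ne' (measure_ne_top _ _)
  calc |P.real (A ∩ B) - P.real A * P.real B|
      = |P.real (A ∩ B) / P.real B - P.real A| * P.real B := by
        rw [← abs_of_pos hBpos, ← abs_mul, abs_of_pos hBpos, sub_mul, div_mul_cancel₀ _ hBpos.ne']
    _ ≤ sSup S * P.real B := by
        gcongr
        exact le_csSup hS ⟨A, B, hA, hB, hB0, rfl⟩

theorem stmt8 {Ω : Type} [m : MeasurableSpace Ω] (P : Measure Ω)
    [IsProbabilityMeasure P] (F G : MeasurableSpace Ω) (hF : F ≤ m) (hG : G ≤ m) :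
    sSup {x : ℝ | ∃ f g : Ω → ℝ,
        Measurable[F] f ∧ Measurable[G] g ∧ MemLp f 2 P ∧ MemLp g 2 P ∧
        0 < (∫ ω, (f ω) ^ 2 ∂P) - (∫ ω, f ω ∂P) ^ 2 ∧
        0 < (∫ ω, (g ω) ^ 2 ∂P) - (∫ ω, g ω ∂P) ^ 2 ∧
        x = |(∫ ω, f ω * g ω ∂P) - (∫ ω, f ω ∂P) * (∫ ω, g ω ∂P)| /
          Real.sqrt ((((∫ ω, (f ω) ^ 2 ∂P) - (∫ ω, f ω ∂P) ^ 2)) *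
            (((∫ ω, (g ω) ^ 2 ∂P) - (∫ ω, g ω ∂P) ^ 2)))} ≤
      2 * Real.sqrt (sSup {x : ℝ | ∃ A B : Set Ω,
        MeasurableSet[G] A ∧ MeasurableSet[F] B ∧ 0 < P B ∧
        x = |(P (A ∩ B)).toReal / (P B).toReal - (P A).toReal|}) := by
  set φ := sSup {x : ℝ | ∃ A B : Set Ω, MeasurableSet[G] A ∧ MeasurableSet[F] B ∧ 0 < P B ∧
    x = |(P (A ∩ B)).toReal / (P B).toReal - (P A).toReal|}
  have hφ : PhiMixingLE P F G φ := phiMixingLE_sSup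
  refine Real.sSup_le ?_ (by positivity)
  rintro _ ⟨f, g, hf, hg, hf2, hg2, -, -, rfl⟩
  have hcov : cov[f, g; P] = ∫ ω, f ω * g ω ∂P - P[f] * P[g] := covariance_eq_sub hf2 hg2
  have hvar {X : Ω → ℝ} (hX : MemLp X 2 P) : Var[X; P] = ∫ ω, X ω ^ 2 ∂P - P[X] ^ 2 :=
    variance_eq_sub hX
  rw [← hcov, ← hvar hf2, ← hvar hg2, Real.sqrt_mul (variance_nonneg _ _)]
  refine div_le_of_le_mul₀ (by positivity) (by positivity) ?_
  calc _ ≤ √(2 * φ) * √Var[f; P] * √Var[g; P] := hφ.abs_covariance_le hF hG hf hg hf2 hg2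
    _ ≤ 2 * √φ * (√Var[f; P] * √Var[g; P]) := by
        rw [Real.sqrt_mul zero_le_two, mul_assoc]
        gcongr
        exact Real.sqrt_le_iff.2 ⟨zero_le_two, by norm_num⟩
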